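/- (Existence of PNE.) The mixed-binary quadratic game G^MBQP has at least one pure-strategy Nash equilibrium if: (i) the Key Property (KP) is satisfied for every player's problem P_i^MBQP(x_{-i}); (ii) each block Q^{(i)}_{ii} is positive semidefinite; and (iii) the corresponding completely positive game G^CPP has a pure-strategy Nash equilibrium ((x_i*, X_i*))_{i∈I} with x*_{ik} ∈ {0,1} for every k ∈ B_i and every i ∈ I. -/

import Mathlib

open Matrix BigOperators Finset

/-- The completely positive cone: `M = A * Aᵀ` for some entrywise nonnegative matrix `A`. -/
def IsCP {ι : Type*} [Fintype ι] (M : Matrix ι ι ℝ) : Prop :=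
  ∃ (r : ℕ) (A : Matrix ι (Fin r) ℝ), (∀ i j, 0 ≤ A i j) ∧ M = A * Aᵀ

variable {I : Type*} [Fintype I] [DecidableEq I] {n : I → ℕ} {m : I → ℕ}

/-- Concatenation of a strategy profile into one long vector. -/
def conc (s : (i : I) → Fin (n i) → ℝ) : ((i : I) × Fin (n i)) → ℝ := fun p => s p.1 p.2

/-- Feasibility for player `i`'s problem `P_i^MBQP` (the constraints do not involve
the other players). -/
def MBQPFeas (a : (i : I) → Fin (m i) → Fin (n i) → ℝ) (b : (i : I) → Fin (m i) → ℝ)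
    (B : (i : I) → Set (Fin (n i))) (i : I) (y : Fin (n i) → ℝ) : Prop :=
  (∀ j, a i j ⬝ᵥ y = b i j) ∧ (∀ k ∈ B i, y k = 0 ∨ y k = 1) ∧ (∀ k, 0 ≤ y k)

/-- Player `i`'s payoff `f_i(x) = xᵀQ^{(i)}x + 2c^{(i)ᵀ}x` on the full profile. -/
def payoff (Q : (i : I) → Matrix ((i : I) × Fin (n i)) ((i : I) × Fin (n i)) ℝ)
    (c : (i : I) → ((i : I) × Fin (n i)) → ℝ) (i : I)
    (s : (i : I) → Fin (n i) → ℝ) : ℝ :=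
  conc s ⬝ᵥ (Q i *ᵥ conc s) + 2 * (c i ⬝ᵥ conc s)

/-- Pure-strategy Nash equilibrium of the mixed-binary quadratic game `G^MBQP`. -/
def MBQP_PNE (a : (i : I) → Fin (m i) → Fin (n i) → ℝ) (b : (i : I) → Fin (m i) → ℝ)
    (B : (i : I) → Set (Fin (n i)))
    (Q : (i : I) → Matrix ((i : I) × Fin (n i)) ((i : I) × Fin (n i)) ℝ)
    (c : (i : I) → ((i : I) × Fin (n i)) → ℝ)
    (s : (i : I) → Fin (n i) → ℝ) : Prop :=
  ∀ i : I, MBQPFeas a b B i (s i) ∧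
    ∀ y : Fin (n i) → ℝ, MBQPFeas a b B i y →
      payoff Q c i s ≤ payoff Q c i (Function.update s i y)

/-- Feasibility for player `i`'s problem `P_i^CPP` in the completely positive game. -/
def CPPFeas (a : (i : I) → Fin (m i) → Fin (n i) → ℝ) (b : (i : I) → Fin (m i) → ℝ)
    (B : (i : I) → Set (Fin (n i))) (α : (i : I) → Fin (n i) → ℝ) (i : I)
    (y : Fin (n i) → ℝ) (Y : Matrix (Fin (n i)) (Fin (n i)) ℝ) : Prop :=
  (∀ j, a i j ⬝ᵥ y = b i j) ∧
  (∀ j, a i j ⬝ᵥ (Y *ᵥ a i j) = (b i j) ^ 2) ∧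
  (∀ k ∈ B i, y k = Y k k) ∧
  (∀ l, y l = Matrix.trace (((1 / 2 : ℝ) •
    (Matrix.vecMulVec (α i) (Pi.single l 1) + Matrix.vecMulVec (Pi.single l 1) (α i))) * Y)) ∧
  IsCP Y

/-- Player `i`'s payoff `F_i(x_i, X_i, x_{-i})` in the completely positive game:
`Tr(Q^{(i)}_{ii}X_i) + 2x_{-i}ᵀQ^{(i)}_{-i,i}x_i + x_{-i}ᵀQ^{(i)}_{-i,-i}x_{-i} + 2c^{(i)ᵀ}x`. -/
def Fpay (Q : (i : I) → Matrix ((i : I) × Fin (n i)) ((i : I) × Fin (n i)) ℝ)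
    (c : (i : I) → ((i : I) × Fin (n i)) → ℝ) (i : I)
    (s : (i : I) → Fin (n i) → ℝ) (Y : Matrix (Fin (n i)) (Fin (n i)) ℝ) : ℝ :=
  Matrix.trace ((Matrix.of fun k l => Q i ⟨i, k⟩ ⟨i, l⟩) * Y)
  + 2 * (∑ p : (i : I) × Fin (n i), ∑ k : Fin (n i),
      if p.1 ≠ i then Q i p ⟨i, k⟩ * conc s p * s i k else 0)
  + (∑ p : (i : I) × Fin (n i), ∑ q : (i : I) × Fin (n i),
      if p.1 ≠ i ∧ q.1 ≠ i then Q i p q * conc s p * conc s q else 0)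
  + 2 * (c i ⬝ᵥ conc s)

/-- Pure-strategy Nash equilibrium of the completely positive game `G^CPP`. -/
def CPP_PNE (a : (i : I) → Fin (m i) → Fin (n i) → ℝ) (b : (i : I) → Fin (m i) → ℝ)
    (B : (i : I) → Set (Fin (n i))) (α : (i : I) → Fin (n i) → ℝ)
    (Q : (i : I) → Matrix ((i : I) × Fin (n i)) ((i : I) × Fin (n i)) ℝ)
    (c : (i : I) → ((i : I) × Fin (n i)) → ℝ)
    (s : (i : I) → Fin (n i) → ℝ)
    (XX : (i : I) → Matrix (Fin (n i)) (Fin (n i)) ℝ) : Prop :=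
  ∀ i : I, CPPFeas a b B α i (s i) (XX i) ∧
    ∀ (y : Fin (n i) → ℝ) (Y : Matrix (Fin (n i)) (Fin (n i)) ℝ),
      CPPFeas a b B α i y Y →
        Fpay Q c i s (XX i) ≤ Fpay Q c i (Function.update s i y) Y

/-- The Key Property (KP) for player `i`, with witness `α i = Σ_j y_j a_j^{(i)}`. -/
def KeyProperty (a : (i : I) → Fin (m i) → Fin (n i) → ℝ) (b : (i : I) → Fin (m i) → ℝ)
    (α : (i : I) → Fin (n i) → ℝ) : Prop :=
  ∀ i : I, ∃ y : Fin (m i) → ℝ,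
    (α i = ∑ j, y j • a i j) ∧ (∀ k, 0 ≤ α i k) ∧ (∑ j, y j * b i j) = 1

/-! For symmetric `X` the linking constraint `xₗ = Tr(½(α eₗᵀ + eₗ αᵀ) X)` reads `x = X α`,
and the Key Property gives `αᵀ x = 1` whenever `x` meets the linear constraints. Hence at a
CPP equilibrium `(x*, X*)` we have `αᵀ X* α = 1`, so Cauchy–Schwarz for the form of `X*` makes
`X* - x* x*ᵀ` positive semidefinite, and `Q_ii ⪰ 0` gives `F_i(x*, x* x*ᵀ) ≤ F_i(x*, X*)`. Every
MBQP-feasible `y` lifts to the CPP-feasible `(y, y yᵀ)`, and on such rank-one lifts `F_i = f_i`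
(this uses the symmetry of `Q^{(i)}`). So `f_i(x*) ≤ F_i(x*, X*) ≤ F_i(y, y yᵀ) = f_i(y)`,
while `x* = X* α ≥ 0` and the binary hypothesis make `x*` itself MBQP-feasible. -/

namespace Matrix

variable {ι : Type*} [Fintype ι]

open scoped ComplexOrder MatrixOrder in
theorem PosSemidef.trace_mul_nonneg [DecidableEq ι] {𝕜 : Type*} [RCLike 𝕜]
    {A B : Matrix ι ι 𝕜} (hA : A.PosSemidef) (hB : B.PosSemidef) : 0 ≤ trace (A * B) := by
  obtain ⟨C, rfl⟩ := CStarAlgebra.nonneg_iff_eq_star_mul_self.mp hB.nonneg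
  rw [star_eq_conjTranspose, ← mul_assoc, trace_mul_comm]
  simpa only [mul_assoc] using (hA.mul_mul_conjTranspose_same C).trace_nonneg

theorem PosSemidef.sub_vecMulVec_mulVec {Y : Matrix ι ι ℝ} (hY : Y.PosSemidef) {u : ι → ℝ}
    (hu : u ⬝ᵥ (Y *ᵥ u) = 1) : (Y - vecMulVec (Y *ᵥ u) (Y *ᵥ u)).PosSemidef := by
  refine .of_dotProduct_mulVec_nonneg (hY.isHermitian.sub ?_) fun x => ?_
  · simpa using (posSemidef_vecMulVec_self_star (Y *ᵥ u)).isHermitian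
  · have hYs : Y.IsSymm := hY.isHermitian
    have hsymm : u ⬝ᵥ (Y *ᵥ x) = x ⬝ᵥ (Y *ᵥ u) := by
      rw [dotProduct_mulVec, ← mulVec_transpose, hYs.eq, dotProduct_comm]
    -- Cauchy–Schwarz for the form of `Y`, via `x - ⟨x, u⟩_Y • u`
    have h := hY.dotProduct_mulVec_nonneg (x - (x ⬝ᵥ (Y *ᵥ u)) • u)
    simp only [star_trivial, mulVec_sub, mulVec_smul, dotProduct_sub, sub_dotProduct,
      dotProduct_smul, smul_dotProduct, hsymm, hu, smul_eq_mul] at h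
    simp only [star_trivial, sub_mulVec, dotProduct_sub, vecMulVec_mulVec, op_smul_eq_smul,
      dotProduct_smul, smul_eq_mul, dotProduct_comm (Y *ᵥ u) x]
    linarith

theorem PosSemidef.trace_mul_vecMulVec_mulVec_le [DecidableEq ι] {P Y : Matrix ι ι ℝ}
    (hP : P.PosSemidef) (hY : Y.PosSemidef) {u : ι → ℝ} (hu : u ⬝ᵥ (Y *ᵥ u) = 1) :
    trace (P * vecMulVec (Y *ᵥ u) (Y *ᵥ u)) ≤ trace (P * Y) := by
  have h := hP.trace_mul_nonneg (hY.sub_vecMulVec_mulVec hu)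
  rwa [mul_sub, trace_sub, sub_nonneg] at h

theorem IsSymm.trace_half_vecMulVec_single_mul [DecidableEq ι] {Y : Matrix ι ι ℝ}
    (hY : Y.IsSymm) (u : ι → ℝ) (l : ι) :
    trace (((1 / 2 : ℝ) • (vecMulVec u (Pi.single l 1) + vecMulVec (Pi.single l 1) u)) * Y)
      = (Y *ᵥ u) l := by
  rw [smul_mul, add_mul, trace_smul, trace_add, vecMulVec_mul, vecMulVec_mul, trace_vecMulVec,
    trace_vecMulVec, single_one_vecMul, single_dotProduct, one_mul, ← mulVec_transpose, hY.eq,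
    dotProduct_comm, row, ← mulVec.eq_def (M := Y), smul_eq_mul]
  ring

end Matrix

namespace IsCP

variable {ι : Type*} [Fintype ι] {Y : Matrix ι ι ℝ}

theorem nonneg (hY : IsCP Y) (p q : ι) : 0 ≤ Y p q := by
  obtain ⟨r, A, hA, rfl⟩ := hY
  rw [mul_apply]
  exact Finset.sum_nonneg fun t _ => mul_nonneg (hA p t) (hA q t)

theorem posSemidef (hY : IsCP Y) : Y.PosSemidef := by
  obtain ⟨r, A, -, rfl⟩ := hY
  simpa using posSemidef_self_mul_conjTranspose A

theorem isSymm (hY : IsCP Y) : Y.IsSymm :=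
  hY.posSemidef.isHermitian

theorem vecMulVec_self {y : ι → ℝ} (hy : 0 ≤ y) : IsCP (vecMulVec y y) :=
  ⟨1, replicateCol (Fin 1) y, fun p _ => hy p, by
    rw [transpose_replicateCol]; exact vecMulVec_eq (Fin 1) y y⟩

end IsCP

section SigmaSum

variable {ι : Type*} [Fintype ι] [DecidableEq ι] {κ : ι → Type*} [∀ i, Fintype (κ i)]

theorem Fintype.sum_sigma_eq_sum_fiber_add {M : Type*} [AddCommMonoid M] (i : ι)
    (f : (Σ j, κ j) → M) : ∑ p, f p = ∑ k, f ⟨i, k⟩ + ∑ p, if p.1 ≠ i then f p else 0 := by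
  rw [← Finset.sum_filter_add_sum_filter_not univ (fun p => p.1 = i), Finset.sum_filter,
    Finset.sum_filter, Fintype.sum_sigma]
  congr 1
  rw [Fintype.sum_eq_single i fun j hj => by simp [hj]]
  simp

theorem Fintype.sum_sum_sigma_of_symm {R : Type*} [CommSemiring R] (i : ι)
    {F : (Σ j, κ j) → (Σ j, κ j) → R} (hF : ∀ p q, F p q = F q p) :
    ∑ p, ∑ q, F p q = ∑ k, ∑ l, F ⟨i, k⟩ ⟨i, l⟩
      + 2 * ∑ p, ∑ k, (if p.1 ≠ i then F p ⟨i, k⟩ else 0)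
      + ∑ p, ∑ q, if p.1 ≠ i ∧ q.1 ≠ i then F p q else 0 := by
  have inner : ∀ p, ∑ q, F p q = ∑ l, F p ⟨i, l⟩ + ∑ q, if q.1 ≠ i then F p q else 0 :=
    fun p => sum_sigma_eq_sum_fiber_add i (F p)
  have cross : ∑ k, ∑ q, (if q.1 ≠ i then F ⟨i, k⟩ q else 0)
      = ∑ p, ∑ k, if p.1 ≠ i then F p ⟨i, k⟩ else 0 := by
    rw [Finset.sum_comm]
    simp only [hF _ (Sigma.mk i _)]
  rw [sum_sigma_eq_sum_fiber_add i (fun p => ∑ q, F p q)]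
  simp only [inner, ite_add_zero, ite_sum_zero, ← ite_and, Finset.sum_add_distrib, cross]
  ring

end SigmaSum

section Game

omit [Fintype I] [DecidableEq I]

variable {a : (i : I) → Fin (m i) → Fin (n i) → ℝ} {b : (i : I) → Fin (m i) → ℝ}
  {α : (i : I) → Fin (n i) → ℝ}

theorem KeyProperty.nonneg (hKP : KeyProperty a b α) (i : I) : 0 ≤ α i := by
  obtain ⟨-, -, hα, -⟩ := hKP i
  exact hα

theorem KeyProperty.dotProduct_eq_one (hKP : KeyProperty a b α) (i : I) {z : Fin (n i) → ℝ}
    (hz : ∀ j, a i j ⬝ᵥ z = b i j) : α i ⬝ᵥ z = 1 := by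
  obtain ⟨w, hα, -, hw⟩ := hKP i
  simp only [hα, sum_dotProduct, smul_dotProduct, hz, smul_eq_mul, hw]

variable {B : (i : I) → Set (Fin (n i))} {i : I}

theorem CPPFeas.eq_mulVec {y : Fin (n i) → ℝ} {Y : Matrix (Fin (n i)) (Fin (n i)) ℝ}
    (h : CPPFeas a b B α i y Y) : y = Y *ᵥ α i := by
  obtain ⟨-, -, -, hy, hY⟩ := h
  exact funext fun l => (hy l).trans (hY.isSymm.trace_half_vecMulVec_single_mul _ l)

theorem CPPFeas.mbqpFeas {y : Fin (n i) → ℝ} {Y : Matrix (Fin (n i)) (Fin (n i)) ℝ}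
    (h : CPPFeas a b B α i y Y) (hα : 0 ≤ α i) (hbin : ∀ k ∈ B i, y k = 0 ∨ y k = 1) :
    MBQPFeas a b B i y := by
  have hy := h.eq_mulVec
  obtain ⟨hlin, -, -, -, hY⟩ := h
  refine ⟨hlin, hbin, fun k => ?_⟩
  rw [hy]
  exact dotProduct_nonneg_of_nonneg (hY.nonneg k) hα

theorem CPPFeas.trace_mul_vecMulVec_le {y : Fin (n i) → ℝ}
    {Y P : Matrix (Fin (n i)) (Fin (n i)) ℝ} (h : CPPFeas a b B α i y Y) (hP : P.PosSemidef)
    (hαy : α i ⬝ᵥ y = 1) : trace (P * vecMulVec y y) ≤ trace (P * Y) := by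
  rw [h.eq_mulVec] at hαy ⊢
  obtain ⟨-, -, -, -, hY⟩ := h
  exact hP.trace_mul_vecMulVec_mulVec_le hY.posSemidef hαy

theorem MBQPFeas.cppFeas_vecMulVec_self {y : Fin (n i) → ℝ} (hy : MBQPFeas a b B i y)
    (hαy : α i ⬝ᵥ y = 1) : CPPFeas a b B α i y (vecMulVec y y) := by
  obtain ⟨hlin, hbin, hnonneg⟩ := hy
  refine ⟨hlin, fun j => ?_, fun k hk => ?_, fun l => ?_, IsCP.vecMulVec_self hnonneg⟩
  · rw [vecMulVec_mulVec, op_smul_eq_smul, dotProduct_smul, dotProduct_comm y, hlin,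
      smul_eq_mul, sq]
  · rcases hbin k hk with h | h <;> simp [vecMulVec_apply, h]
  · have hsymm : (vecMulVec y y).IsSymm := by simp [IsSymm, transpose_vecMulVec]
    rw [hsymm.trace_half_vecMulVec_single_mul, vecMulVec_mulVec, op_smul_eq_smul,
      dotProduct_comm y, hαy, one_smul]

end Game

section Payoff

variable (Q : (i : I) → Matrix ((i : I) × Fin (n i)) ((i : I) × Fin (n i)) ℝ)
  (c : (i : I) → ((i : I) × Fin (n i)) → ℝ) (i : I)

theorem Fpay_vecMulVec_self (hQ : (Q i).IsSymm) (s : (i : I) → Fin (n i) → ℝ) :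
    Fpay Q c i s (vecMulVec (s i) (s i)) = payoff Q c i s := by
  have hquad : conc s ⬝ᵥ (Q i *ᵥ conc s) = ∑ p, ∑ q, Q i p q * conc s p * conc s q := by
    simp only [dotProduct, mulVec, Finset.mul_sum]
    exact Finset.sum_congr rfl fun p _ => Finset.sum_congr rfl fun q _ => by ring
  have htrace : trace ((of fun k l => Q i ⟨i, k⟩ ⟨i, l⟩) * vecMulVec (s i) (s i))
      = ∑ k, ∑ l, Q i ⟨i, k⟩ ⟨i, l⟩ * conc s ⟨i, k⟩ * conc s ⟨i, l⟩ := by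
    rw [mul_vecMulVec, trace_vecMulVec]
    simp only [dotProduct, mulVec, of_apply, Finset.sum_mul]
    exact Finset.sum_congr rfl fun k _ => Finset.sum_congr rfl fun l _ => by
      simp only [conc]; ring
  rw [Fintype.sum_sum_sigma_of_symm i fun p q => by rw [hQ.apply p q]; ring] at hquad
  rw [Fpay, payoff, hquad, htrace]
  rfl

theorem Fpay_le_Fpay {s : (i : I) → Fin (n i) → ℝ} {Y Y' : Matrix (Fin (n i)) (Fin (n i)) ℝ}
    (h : trace ((of fun k l => Q i ⟨i, k⟩ ⟨i, l⟩) * Y)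
      ≤ trace ((of fun k l => Q i ⟨i, k⟩ ⟨i, l⟩) * Y')) :
    Fpay Q c i s Y ≤ Fpay Q c i s Y' := by
  unfold Fpay
  linarith

end Payoff

theorem mbqp_pne_exists_general
    (a : (i : I) → Fin (m i) → Fin (n i) → ℝ) (b : (i : I) → Fin (m i) → ℝ)
    (B : (i : I) → Set (Fin (n i))) (α : (i : I) → Fin (n i) → ℝ)
    (Q : (i : I) → Matrix ((i : I) × Fin (n i)) ((i : I) × Fin (n i)) ℝ)
    (c : (i : I) → ((i : I) × Fin (n i)) → ℝ)
    (hQsym : ∀ i, (Q i).IsSymm)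
    (hKP : KeyProperty a b α)
    (hpsd : ∀ i, (Matrix.of fun k l => Q i ⟨i, k⟩ ⟨i, l⟩ :
      Matrix (Fin (n i)) (Fin (n i)) ℝ).PosSemidef)
    (hcpp : ∃ (s : (i : I) → Fin (n i) → ℝ)
      (XX : (i : I) → Matrix (Fin (n i)) (Fin (n i)) ℝ),
        CPP_PNE a b B α Q c s XX ∧ ∀ i, ∀ k ∈ B i, s i k = 0 ∨ s i k = 1) :
    ∃ s : (i : I) → Fin (n i) → ℝ, MBQP_PNE a b B Q c s := by
  obtain ⟨s, XX, hPNE, hbin⟩ := hcpp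
  refine ⟨s, fun i => ?_⟩
  obtain ⟨hfeas, hopt⟩ := hPNE i
  have hαs : α i ⬝ᵥ s i = 1 := hKP.dotProduct_eq_one i hfeas.1
  refine ⟨hfeas.mbqpFeas (hKP.nonneg i) (hbin i), fun y hy => ?_⟩
  calc payoff Q c i s = Fpay Q c i s (vecMulVec (s i) (s i)) :=
        (Fpay_vecMulVec_self Q c i (hQsym i) s).symm
    _ ≤ Fpay Q c i s (XX i) := Fpay_le_Fpay Q c i (hfeas.trace_mul_vecMulVec_le (hpsd i) hαs)
    _ ≤ Fpay Q c i (Function.update s i y) (vecMulVec y y) :=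
        hopt y _ (hy.cppFeas_vecMulVec_self (hKP.dotProduct_eq_one i hy.1))
    _ = payoff Q c i (Function.update s i y) := by
        simpa using Fpay_vecMulVec_self Q c i (hQsym i) (Function.update s i y)

/-- Existence of PNE: `G^MBQP` has at least one pure-strategy Nash
equilibrium if (i) the Key Property holds for every player, (ii) each `Q^{(i)}_{ii}` is
positive semidefinite, and (iii) the corresponding `G^CPP` has a pure-strategy Nash
equilibrium `((x_i*, X_i*))_i` with `x*_{ik} ∈ {0,1}` for every `k ∈ B_i` and `i`. -/
theorem mbqp_pne_exists
    (a : (i : I) → Fin (m i) → Fin (n i) → ℝ) (b : (i : I) → Fin (m i) → ℝ)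
    (B : (i : I) → Set (Fin (n i))) (α : (i : I) → Fin (n i) → ℝ)
    (Q : (i : I) → Matrix ((i : I) × Fin (n i)) ((i : I) × Fin (n i)) ℝ)
    (c : (i : I) → ((i : I) × Fin (n i)) → ℝ)
    (hQsym : ∀ i, (Q i).IsSymm)
    (hbounded : ∀ i, Bornology.IsBounded {y : Fin (n i) → ℝ | MBQPFeas a b B i y})
    (hKP : KeyProperty a b α)
    (hpsd : ∀ i, (Matrix.of fun k l => Q i ⟨i, k⟩ ⟨i, l⟩ :
      Matrix (Fin (n i)) (Fin (n i)) ℝ).PosSemidef)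
    (hcpp : ∃ (s : (i : I) → Fin (n i) → ℝ)
      (XX : (i : I) → Matrix (Fin (n i)) (Fin (n i)) ℝ),
        CPP_PNE a b B α Q c s XX ∧ ∀ i, ∀ k ∈ B i, s i k = 0 ∨ s i k = 1) :
    ∃ s : (i : I) → Fin (n i) → ℝ, MBQP_PNE a b B Q c s :=
  mbqp_pne_exists_general a b B α Q c hQsym hKP hpsd hcpp
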